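/- Let α ∈ 𝒮(ℝ). There exists a constant C such that for all r > 1 and all m ∈ ℝ, ∫₀^{π/4} |α̂(m − r cos θ)| dθ ≤ C r^{−1/2} ⟨ r − |m| ⟩^{−1/2}. -/

import Mathlib

/-!
Write `b = r - m`, so that `m - r cos θ = r (1 - cos θ) - b`, and bound `|α̂(x)| ≤ D ⟨x⟩⁻²`.
The substitution `v = r (1 - cos θ)` has Jacobian `r sin θ ≥ √r √v` on `[0, π/2]`, which turns
the `θ`-integral into at most `r^{-1/2} ∫₀^∞ v^{-1/2} ⟨v - b⟩⁻² dv`. Peetre's inequality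
`⟨b⟩ ≤ √2 ⟨v⟩ ⟨v - b⟩` bounds this last integral by a multiple of `⟨b⟩^{-1/2}`: near `v = 0` the
factor `⟨v - b⟩⁻²` is comparable to `⟨b⟩⁻²`, and for `v ≥ 1` the factor `v^{-1/2}` pays for
`⟨b⟩^{1/2}` up to the integrable `⟨v - b⟩^{-3/2}`. Finally `⟨r - m⟩ ≥ ⟨r - |m|⟩` as `r > 0`.
-/

open Real SchwartzMap FourierTransform MeasureTheory Set

theorem SchwartzMap.exists_norm_le_mul_inv_one_add_sq {E : Type*} [NormedAddCommGroup E]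
    [NormedSpace ℝ E] (f : 𝓢(ℝ, E)) :
    ∃ D : ℝ, 0 < D ∧ ∀ x : ℝ, ‖f x‖ ≤ D * (1 + x ^ 2)⁻¹ := by
  obtain ⟨C₀, hC₀, h₀⟩ := f.decay 0 0
  obtain ⟨C₂, hC₂, h₂⟩ := f.decay 2 0
  refine ⟨C₀ + C₂, by positivity, fun x => ?_⟩
  have h₀x := h₀ x
  have h₂x := h₂ x
  simp only [pow_zero, one_mul, norm_iteratedFDeriv_zero, norm_eq_abs, sq_abs] at h₀x h₂x
  rw [← div_eq_mul_inv, le_div_iff₀ (by positivity)]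
  linarith

theorem one_sub_cos_pos {θ : ℝ} (h₀ : 0 < θ) (h : θ < 2 * π) : 0 < 1 - cos θ := by
  have hne : cos θ ≠ 1 := fun h₁ => h₀.ne' ((cos_eq_one_iff_of_lt_of_lt (by linarith) h).1 h₁)
  exact sub_pos.2 ((cos_le_one θ).lt_of_ne hne)

theorem one_le_sin_mul_one_sub_cos_rpow {θ : ℝ} (h₀ : 0 < θ) (h : θ ≤ π / 2) :
    1 ≤ sin θ * (1 - cos θ) ^ (-(1 / 2) : ℝ) := by
  have hcos : 0 ≤ cos θ := cos_nonneg_of_neg_pi_div_two_le_of_le (by linarith) h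
  have hu : 0 < 1 - cos θ := one_sub_cos_pos h₀ (by linarith [pi_pos])
  have hsin : √(1 - cos θ) ≤ sin θ := by
    rw [sqrt_le_left (sin_nonneg_of_nonneg_of_le_pi h₀.le (by linarith [pi_pos]))]
    nlinarith [sin_sq_add_cos_sq θ]
  rw [rpow_neg hu.le, ← sqrt_eq_rpow, ← div_eq_mul_inv, one_le_div (sqrt_pos.2 hu)]
  exact hsin

theorem one_le_rpow_neg_half_mul_abs_mul_sin_mul_rpow {r θ : ℝ} (hr : 0 < r) (h₀ : 0 < θ)
    (h : θ ≤ π / 2) :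
    1 ≤ r ^ (-(1 / 2) : ℝ) * (|r * sin θ| * (r * (1 - cos θ)) ^ (-(1 / 2) : ℝ)) := by
  have hsin : 0 ≤ sin θ := sin_nonneg_of_nonneg_of_le_pi h₀.le (by linarith [pi_pos])
  have hcos : 0 ≤ 1 - cos θ := by linarith [cos_le_one θ]
  have hr' : r ^ (-(1 / 2) : ℝ) * r * r ^ (-(1 / 2) : ℝ) = 1 := by
    rw [mul_comm, ← mul_assoc, ← rpow_add hr, ← rpow_add_one hr.ne']
    norm_num
  calc 1 ≤ sin θ * (1 - cos θ) ^ (-(1 / 2) : ℝ) := one_le_sin_mul_one_sub_cos_rpow h₀ h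
    _ = _ := by
        rw [abs_of_nonneg (mul_nonneg hr.le hsin), mul_rpow hr.le hcos]
        linear_combination (sin θ * (1 - cos θ) ^ (-(1 / 2) : ℝ)) * hr'.symm

theorem integral_comp_mul_one_sub_cos_le {F : ℝ → ℝ} (hF₀ : ∀ v, 0 < v → 0 ≤ F v)
    (hF : IntegrableOn (fun v => v ^ (-(1 / 2) : ℝ) * F v) (Ioi 0)) {r a : ℝ} (hr : 0 < r)
    (ha₀ : 0 ≤ a) (ha : a ≤ π / 2) :
    ∫ θ in 0..a, F (r * (1 - cos θ)) ≤
      r ^ (-(1 / 2) : ℝ) * ∫ v in Ioi 0, v ^ (-(1 / 2) : ℝ) * F v := by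
  set f : ℝ → ℝ := fun θ => r * (1 - cos θ)
  have hf' : ∀ θ ∈ Ioo 0 a, HasDerivWithinAt f (r * sin θ) (Ioo 0 a) θ := fun θ _ => by
    simpa using (((hasDerivAt_cos θ).const_sub 1).const_mul r).hasDerivWithinAt
  have hf : InjOn f (Ioo 0 a) := fun x hx y hy hxy => by
    refine injOn_cos ⟨hx.1.le, by linarith [hx.2, pi_pos]⟩ ⟨hy.1.le, by linarith [hy.2, pi_pos]⟩ ?_
    have := mul_left_cancel₀ hr.ne' hxy
    linarith
  have hpos : ∀ θ ∈ Ioo 0 a, 0 < f θ := fun θ hθ =>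
    mul_pos hr (one_sub_cos_pos hθ.1 (by linarith [hθ.2, pi_pos]))
  have himage : f '' Ioo 0 a ⊆ Ioi 0 := by
    rintro _ ⟨θ, hθ, rfl⟩
    exact hpos θ hθ
  -- Substituting in the majorant `v^{-1/2} F v` rather than in `F` avoids inverting `cos`.
  have hint := (integrableOn_image_iff_integrableOn_abs_deriv_smul measurableSet_Ioo hf' hf
    (fun v => v ^ (-(1 / 2) : ℝ) * F v)).1 (hF.mono_set himage)
  have hjacobian : ∀ θ ∈ Ioo 0 a, F (f θ) ≤
      r ^ (-(1 / 2) : ℝ) * (|r * sin θ| • ((f θ) ^ (-(1 / 2) : ℝ) * F (f θ))) := fun θ hθ => by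
    rw [smul_eq_mul, ← mul_assoc, ← mul_assoc, mul_assoc _ |r * sin θ|]
    exact le_mul_of_one_le_left (hF₀ _ (hpos θ hθ))
      (one_le_rpow_neg_half_mul_abs_mul_sin_mul_rpow hr hθ.1 (hθ.2.le.trans ha))
  calc ∫ θ in 0..a, F (f θ) = ∫ θ in Ioo 0 a, F (f θ) := by
        rw [intervalIntegral.integral_of_le ha₀, integral_Ioc_eq_integral_Ioo]
    _ ≤ ∫ θ in Ioo 0 a, r ^ (-(1 / 2) : ℝ) *
          (|r * sin θ| • ((f θ) ^ (-(1 / 2) : ℝ) * F (f θ))) := by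
        refine integral_mono_of_nonneg ?_ (hint.const_mul _) ?_
        · exact (ae_restrict_iff' measurableSet_Ioo).2
            (Filter.Eventually.of_forall fun θ hθ => hF₀ _ (hpos θ hθ))
        · exact (ae_restrict_iff' measurableSet_Ioo).2 (Filter.Eventually.of_forall hjacobian)
    _ = r ^ (-(1 / 2) : ℝ) * ∫ v in f '' Ioo 0 a, v ^ (-(1 / 2) : ℝ) * F v := by
        rw [integral_const_mul, integral_image_eq_integral_abs_deriv_smul measurableSet_Ioo hf' hf]
    _ ≤ r ^ (-(1 / 2) : ℝ) * ∫ v in Ioi 0, v ^ (-(1 / 2) : ℝ) * F v := by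
        refine mul_le_mul_of_nonneg_left (setIntegral_mono_set hF ?_ himage.eventuallyLE)
          (by positivity)
        exact (ae_restrict_iff' measurableSet_Ioi).2
          (Filter.Eventually.of_forall fun v hv => mul_nonneg (rpow_nonneg hv.le _) (hF₀ v hv))

theorem one_add_sq_le_two_mul_one_add_sq_mul_one_add_sq (b v : ℝ) :
    1 + b ^ 2 ≤ 2 * (1 + v ^ 2) * (1 + (v - b) ^ 2) := by
  nlinarith [sq_nonneg (v + (v - b)), sq_nonneg (v * (v - b))]

theorem one_add_sq_rpow_mul_inv_one_add_sq_sub_le_of_sq_le_one {b v : ℝ} (hv : v ^ 2 ≤ 1) :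
    (1 + b ^ 2) ^ (1 / 4 : ℝ) * (1 + (v - b) ^ 2)⁻¹ ≤ 4 := by
  have hP : 0 < 1 + (v - b) ^ 2 := by positivity
  rw [← div_eq_mul_inv, div_le_iff₀ hP]
  calc (1 + b ^ 2) ^ (1 / 4 : ℝ) ≤ 1 + b ^ 2 :=
        rpow_le_self_of_one_le (by nlinarith) (by norm_num)
    _ ≤ 2 * (1 + v ^ 2) * (1 + (v - b) ^ 2) := one_add_sq_le_two_mul_one_add_sq_mul_one_add_sq b v
    _ ≤ 4 * (1 + (v - b) ^ 2) := by gcongr; linarith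

theorem one_add_sq_rpow_mul_rpow_mul_inv_one_add_sq_sub_le_of_one_le {b v : ℝ} (hv : 1 ≤ v) :
    (1 + b ^ 2) ^ (1 / 4 : ℝ) * (v ^ (-(1 / 2) : ℝ) * (1 + (v - b) ^ 2)⁻¹) ≤
      2 * (1 + (v - b) ^ 2) ^ (-(3 / 4) : ℝ) := by
  have hv₀ : 0 < v := zero_lt_one.trans_le hv
  have hP : 0 < 1 + (v - b) ^ 2 := by positivity
  have hG : (1 + b ^ 2) ^ (1 / 4 : ℝ) ≤
      (4 : ℝ) ^ (1 / 4 : ℝ) * v ^ (1 / 2 : ℝ) * (1 + (v - b) ^ 2) ^ (1 / 4 : ℝ) := by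
    have hv2 : (v ^ 2) ^ (1 / 4 : ℝ) = v ^ (1 / 2 : ℝ) := by
      rw [← rpow_natCast, ← rpow_mul hv₀.le]
      norm_num
    rw [← hv2, ← mul_rpow (by norm_num) (by positivity), ← mul_rpow (by positivity) hP.le]
    refine rpow_le_rpow (by positivity)
      ((one_add_sq_le_two_mul_one_add_sq_mul_one_add_sq b v).trans ?_) (by norm_num)
    exact mul_le_mul_of_nonneg_right (by nlinarith) hP.le
  have h4 : (4 : ℝ) ^ (1 / 4 : ℝ) ≤ 2 := by
    rw [show (4 : ℝ) = 2 ^ (2 : ℝ) by norm_num, ← rpow_mul zero_le_two]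
    exact (rpow_le_rpow_of_exponent_le one_le_two (by norm_num)).trans_eq (rpow_one 2)
  calc (1 + b ^ 2) ^ (1 / 4 : ℝ) * (v ^ (-(1 / 2) : ℝ) * (1 + (v - b) ^ 2)⁻¹)
      ≤ 2 * v ^ (1 / 2 : ℝ) * (1 + (v - b) ^ 2) ^ (1 / 4 : ℝ) *
          (v ^ (-(1 / 2) : ℝ) * (1 + (v - b) ^ 2)⁻¹) := by
        gcongr
        exact hG.trans (by gcongr)
    _ = 2 * (v ^ (1 / 2 : ℝ) * v ^ (-(1 / 2) : ℝ)) *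
          ((1 + (v - b) ^ 2) ^ (1 / 4 : ℝ) * (1 + (v - b) ^ 2) ^ (-1 : ℝ)) := by
        rw [rpow_neg_one]; ring
    _ = 2 * (1 + (v - b) ^ 2) ^ (-(3 / 4) : ℝ) := by
        rw [← rpow_add hv₀, ← rpow_add hP]
        norm_num

theorem integrable_one_add_sq_rpow {s : ℝ} (hs : s < -(1 / 2)) :
    Integrable fun x : ℝ => (1 + x ^ 2) ^ s := by
  have := integrable_rpow_neg_one_add_norm_sq (E := ℝ) (μ := volume) (r := -2 * s)
    (by simp; linarith)
  simpa [sq_abs, ← mul_assoc] using this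

theorem integrableOn_Ioc_zero_one_rpow_neg_half :
    IntegrableOn (fun v : ℝ => v ^ (-(1 / 2) : ℝ)) (Ioc 0 1) := by
  rw [← intervalIntegrable_iff_integrableOn_Ioc_of_le zero_le_one]
  exact intervalIntegral.intervalIntegrable_rpow' (by norm_num)

theorem integral_Ioc_zero_one_rpow_neg_half : ∫ v in Ioc (0 : ℝ) 1, v ^ (-(1 / 2) : ℝ) = 2 := by
  rw [← intervalIntegral.integral_of_le zero_le_one, integral_rpow (Or.inl (by norm_num))]
  norm_num

theorem integrableOn_rpow_neg_half_mul_inv_one_add_sq_sub (b : ℝ) :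
    IntegrableOn (fun v => v ^ (-(1 / 2) : ℝ) * (1 + (v - b) ^ 2)⁻¹) (Ioi 0) := by
  have hmeas : AEStronglyMeasurable (fun v : ℝ => v ^ (-(1 / 2) : ℝ) * (1 + (v - b) ^ 2)⁻¹) :=
    by fun_prop
  rw [← Ioc_union_Ioi_eq_Ioi zero_le_one]
  refine IntegrableOn.union ?_ ?_
  · refine integrableOn_Ioc_zero_one_rpow_neg_half.mono' hmeas.restrict
      ((ae_restrict_iff' measurableSet_Ioc).2 (Filter.Eventually.of_forall fun v hv => ?_))
    have := rpow_nonneg hv.1.le (-(1 / 2))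
    rw [norm_mul, norm_of_nonneg this, norm_inv, norm_of_nonneg (by positivity)]
    exact mul_le_of_le_one_right this (inv_le_one_of_one_le₀ (by nlinarith))
  · refine (integrable_inv_one_add_sq.comp_sub_right b).integrableOn.mono' hmeas.restrict
      ((ae_restrict_iff' measurableSet_Ioi).2 (Filter.Eventually.of_forall fun v hv => ?_))
    have := rpow_nonneg (zero_le_one.trans hv.le) (-(1 / 2))
    rw [norm_mul, norm_of_nonneg this, norm_inv, norm_of_nonneg (by positivity)]
    exact mul_le_of_le_one_left (by positivity)
      (rpow_le_one_of_one_le_of_nonpos hv.le (by norm_num))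

theorem one_add_sq_rpow_mul_integral_rpow_neg_half_mul_inv_one_add_sq_sub_le (b : ℝ) :
    (1 + b ^ 2) ^ (1 / 4 : ℝ) * ∫ v in Ioi 0, v ^ (-(1 / 2) : ℝ) * (1 + (v - b) ^ 2)⁻¹ ≤
      8 + 2 * ∫ x : ℝ, (1 + x ^ 2) ^ (-(3 / 4) : ℝ) := by
  set w : ℝ → ℝ := fun v => v ^ (-(1 / 2) : ℝ) * (1 + (v - b) ^ 2)⁻¹
  set G : ℝ := (1 + b ^ 2) ^ (1 / 4 : ℝ)
  have hw := integrableOn_rpow_neg_half_mul_inv_one_add_sq_sub b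
  rw [← Ioc_union_Ioi_eq_Ioi zero_le_one] at hw
  have hnear : ∫ v in Ioc 0 1, G * w v ≤ ∫ v in Ioc (0 : ℝ) 1, 4 * v ^ (-(1 / 2) : ℝ) := by
    refine setIntegral_mono_on ((hw.mono_set subset_union_left).const_mul G)
      (integrableOn_Ioc_zero_one_rpow_neg_half.const_mul 4) measurableSet_Ioc fun v hv => ?_
    have := one_add_sq_rpow_mul_inv_one_add_sq_sub_le_of_sq_le_one (b := b)
      (show v ^ 2 ≤ 1 by nlinarith [hv.1, hv.2])
    calc G * w v = G * (1 + (v - b) ^ 2)⁻¹ * v ^ (-(1 / 2) : ℝ) := by ring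
      _ ≤ 4 * v ^ (-(1 / 2) : ℝ) := by gcongr; exact rpow_nonneg hv.1.le _
  have hfar : ∫ v in Ioi 1, G * w v ≤ 2 * ∫ x : ℝ, (1 + x ^ 2) ^ (-(3 / 4) : ℝ) := by
    have hq := (integrable_one_add_sq_rpow (s := -(3 / 4)) (by norm_num)).comp_sub_right b
    calc ∫ v in Ioi 1, G * w v ≤ ∫ v in Ioi 1, 2 * (1 + (v - b) ^ 2) ^ (-(3 / 4) : ℝ) :=
          setIntegral_mono_on ((hw.mono_set subset_union_right).const_mul G)
            (hq.integrableOn.const_mul 2) measurableSet_Ioi fun v hv =>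
            one_add_sq_rpow_mul_rpow_mul_inv_one_add_sq_sub_le_of_one_le hv.le
      _ ≤ ∫ v, 2 * (1 + (v - b) ^ 2) ^ (-(3 / 4) : ℝ) :=
          setIntegral_le_integral (hq.const_mul 2)
            (Filter.Eventually.of_forall fun _ => by positivity)
      _ = 2 * ∫ x : ℝ, (1 + x ^ 2) ^ (-(3 / 4) : ℝ) := by
          rw [integral_const_mul,
            integral_sub_right_eq_self (fun x => (1 + x ^ 2) ^ (-(3 / 4) : ℝ))]
  rw [← integral_const_mul, ← Ioc_union_Ioi_eq_Ioi zero_le_one,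
    setIntegral_union Ioc_disjoint_Ioi_same measurableSet_Ioi
      ((hw.mono_set subset_union_left).const_mul G) ((hw.mono_set subset_union_right).const_mul G)]
  refine (add_le_add hnear hfar).trans_eq ?_
  rw [integral_const_mul, integral_Ioc_zero_one_rpow_neg_half]
  norm_num

theorem integral_rpow_neg_half_mul_inv_one_add_sq_sub_le (b : ℝ) :
    ∫ v in Ioi 0, v ^ (-(1 / 2) : ℝ) * (1 + (v - b) ^ 2)⁻¹ ≤
      (8 + 2 * ∫ x : ℝ, (1 + x ^ 2) ^ (-(3 / 4) : ℝ)) * (1 + b ^ 2) ^ (-(1 / 4) : ℝ) := by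
  rw [rpow_neg (by positivity), ← div_eq_mul_inv, le_div_iff₀ (by positivity), mul_comm]
  exact one_add_sq_rpow_mul_integral_rpow_neg_half_mul_inv_one_add_sq_sub_le b

theorem integral_norm_comp_sub_mul_cos_le {E : Type*} [NormedAddCommGroup E] {g : ℝ → E}
    (hg : Continuous g) {D : ℝ} (hD : ∀ x, ‖g x‖ ≤ D * (1 + x ^ 2)⁻¹) {m r a : ℝ} (hr : 0 < r)
    (ha₀ : 0 ≤ a) (ha : a ≤ π / 2) :
    ∫ θ in 0..a, ‖g (m - r * cos θ)‖ ≤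
      D * (8 + 2 * ∫ x : ℝ, (1 + x ^ 2) ^ (-(3 / 4) : ℝ)) * r ^ (-(1 / 2) : ℝ) *
        (1 + (r - m) ^ 2) ^ (-(1 / 4) : ℝ) := by
  set b := r - m
  have hw := integrableOn_rpow_neg_half_mul_inv_one_add_sq_sub b
  have hbound : ∀ v, 0 < v → v ^ (-(1 / 2) : ℝ) * ‖g (v - b)‖ ≤
      D * (v ^ (-(1 / 2) : ℝ) * (1 + (v - b) ^ 2)⁻¹) := fun v hv => by
    rw [mul_left_comm]
    exact mul_le_mul_of_nonneg_left (hD _) (rpow_nonneg hv.le _)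
  have hint : IntegrableOn (fun v => v ^ (-(1 / 2) : ℝ) * ‖g (v - b)‖) (Ioi 0) := by
    refine (hw.const_mul D).mono' (by fun_prop) ((ae_restrict_iff' measurableSet_Ioi).2
      (Filter.Eventually.of_forall fun v hv => ?_))
    rw [norm_of_nonneg (mul_nonneg (rpow_nonneg hv.le _) (norm_nonneg _))]
    exact hbound v hv
  have hD₀ : 0 ≤ D := by simpa using (norm_nonneg (g 0)).trans (hD 0)
  calc ∫ θ in 0..a, ‖g (m - r * cos θ)‖ = ∫ θ in 0..a, ‖g (r * (1 - cos θ) - b)‖ := by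
        simp only [b]; ring_nf
    _ ≤ r ^ (-(1 / 2) : ℝ) * ∫ v in Ioi 0, v ^ (-(1 / 2) : ℝ) * ‖g (v - b)‖ :=
        integral_comp_mul_one_sub_cos_le (fun _ _ => norm_nonneg _) hint hr ha₀ ha
    _ ≤ r ^ (-(1 / 2) : ℝ) * (D * ∫ v in Ioi 0, v ^ (-(1 / 2) : ℝ) * (1 + (v - b) ^ 2)⁻¹) := by
        rw [← integral_const_mul D]
        exact mul_le_mul_of_nonneg_left
          (setIntegral_mono_on hint (hw.const_mul D) measurableSet_Ioi hbound) (by positivity)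
    _ ≤ r ^ (-(1 / 2) : ℝ) * (D * ((8 + 2 * ∫ x : ℝ, (1 + x ^ 2) ^ (-(3 / 4) : ℝ)) *
          (1 + b ^ 2) ^ (-(1 / 4) : ℝ))) := by
        gcongr
        exact integral_rpow_neg_half_mul_inv_one_add_sq_sub_le b
    _ = _ := by ring

/-- For a Schwartz function `α` there is `C` such that for all `r > 1` and `m ∈ ℝ`,
`∫₀^{π/4} |α̂(m − r cos θ)| dθ ≤ C r^{-1/2} ⟨r − |m|⟩^{-1/2}`. -/
theorem bessel_kernel_near_zero (α : SchwartzMap ℝ ℂ) :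
    ∃ C : ℝ, 0 < C ∧ ∀ m r : ℝ, 1 < r →
      (∫ θ in (0:ℝ)..(π / 4), ‖𝓕 (⇑α) (m - r * Real.cos θ)‖)
        ≤ C * r ^ (-(1/2) : ℝ) * (1 + (r - |m|) ^ 2) ^ (-(1/4) : ℝ) := by
  obtain ⟨D, hD, hdecay⟩ := (𝓕 α).exists_norm_le_mul_inv_one_add_sq
  have hK : 0 < 8 + 2 * ∫ x : ℝ, (1 + x ^ 2) ^ (-(3 / 4) : ℝ) := by
    have : 0 ≤ ∫ x : ℝ, (1 + x ^ 2) ^ (-(3 / 4) : ℝ) := integral_nonneg fun x => by positivity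
    linarith
  refine ⟨_, mul_pos hD hK, fun m r hr => ?_⟩
  have hr₀ : 0 < r := zero_lt_one.trans hr
  calc ∫ θ in (0:ℝ)..(π / 4), ‖𝓕 (⇑α) (m - r * cos θ)‖
      ≤ _ * r ^ (-(1 / 2) : ℝ) * (1 + (r - m) ^ 2) ^ (-(1 / 4) : ℝ) :=
        integral_norm_comp_sub_mul_cos_le (𝓕 α).continuous hdecay hr₀ (by positivity)
          (by linarith [pi_pos])
    _ ≤ _ := by
        refine mul_le_mul_of_nonneg_left (rpow_le_rpow_of_nonpos (by positivity) ?_ (by norm_num))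
          (by positivity)
        nlinarith [le_abs_self m, neg_abs_le m, sq_abs m]
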